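/- arXiv:2106.07598 — 5 statements merged into one kernel-verified Lean document; each statement's English description precedes it below -/
import Mathlib

section
/- Let γ > 1, a ∈ ℝ, r₀ > 0 with Δ(r₀) > 0 where Δ(r) = r² − 2r + a². Let B, u, c : ℝ → ℝ be differentiable at r₀ with B(r₀) > 0, 0 < u(r₀) < 1, 0 < c(r₀) and c(r₀)² < γ − 1. Define E(r) = ((γ−1)/(γ−1−c(r)²))·√(Δ(r)/(B(r)(1−u(r)²))) and Ξ(r) = √(Δ(r))·c(r)^{2/(γ−1)}·(u(r)/√(1−u(r)²))·((γ−1)/(γ−1−c(r)²))^{1/(γ−1)}·r. If E′(r₀) = 0 and Ξ′(r₀) = 0, then at r = r₀: (u² − c²)·u′ = u(1−u²)·[ c²·(2r² − 3r + a²)/(Δ·r) + (1/2)·(B′/B − Δ′/Δ) ], where Δ′ = 2r − 2. -/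
/-!
Take logarithmic derivatives. Since `E(r₀)` and `Ξ(r₀)` are nonzero, `E′(r₀) = Ξ′(r₀) = 0` says
that both logarithmic derivatives vanish, which gives two linear relations between `u′` and `c′`.
The sound speed enters `Ξ` through `c^(2/(γ-1))·((γ-1)/(γ-1-c²))^(1/(γ-1))`, whose logarithmic
derivative `2c′/(c(γ-1-c²))` is exactly `1/c²` times the one of the factor `(γ-1)/(γ-1-c²)` of
`E`; so `c²·(Ξ′/Ξ) − E′/E` eliminates `c′` and leaves the velocity-gradient equation.
-/

/-- Phrased through `HasDerivAt` rather than `f′/f`, so that it needs no `f x ≠ 0` and the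
product and quotient rules carry no differentiability side conditions. -/
def HasLogDerivAt {𝕜 : Type*} [NontriviallyNormedField 𝕜] (f : 𝕜 → 𝕜) (L x : 𝕜) : Prop :=
  HasDerivAt f (f x * L) x

section

variable {𝕜 : Type*} [NontriviallyNormedField 𝕜] {f g : 𝕜 → 𝕜} {f' L M x : 𝕜}

theorem HasDerivAt.hasLogDerivAt (hf : HasDerivAt f f' x) (hx : f x ≠ 0) :
    HasLogDerivAt f (f' / f x) x := by
  rwa [HasLogDerivAt, mul_div_cancel₀ _ hx]

theorem hasLogDerivAt_const (a x : 𝕜) : HasLogDerivAt (fun _ => a) 0 x := by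
  simpa [HasLogDerivAt] using hasDerivAt_const x a

theorem hasLogDerivAt_id' (hx : x ≠ 0) : HasLogDerivAt (fun y => y) (1 / x) x := by
  simpa using (hasDerivAt_id' x).hasLogDerivAt hx

theorem HasLogDerivAt.mul (hf : HasLogDerivAt f L x) (hg : HasLogDerivAt g M x) :
    HasLogDerivAt (fun y => f y * g y) (L + M) x := by
  unfold HasLogDerivAt at *
  exact (hf.mul hg).congr_deriv (by ring)

theorem HasLogDerivAt.div (hf : HasLogDerivAt f L x) (hg : HasLogDerivAt g M x) (hx : g x ≠ 0) :
    HasLogDerivAt (fun y => f y / g y) (L - M) x := by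
  unfold HasLogDerivAt at *
  exact (hf.div hg hx).congr_deriv (by field_simp)

theorem HasLogDerivAt.congr_logDeriv (hf : HasLogDerivAt f L x) (h : L = M) : HasLogDerivAt f M x :=
  h ▸ hf

theorem HasLogDerivAt.eq_zero_of_deriv_eq_zero (hf : HasLogDerivAt f L x) (hx : f x ≠ 0)
    (h : deriv f x = 0) : L = 0 := by
  rw [hf.deriv] at h
  exact (mul_eq_zero.mp h).resolve_left hx

end

section

variable {f : ℝ → ℝ} {L x : ℝ}

theorem HasLogDerivAt.sqrt (hf : HasLogDerivAt f L x) (hx : 0 < f x) :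
    HasLogDerivAt (fun y => √(f y)) (L / 2) x := by
  unfold HasLogDerivAt at *
  refine (hf.sqrt hx.ne').congr_deriv ?_
  field_simp
  rw [Real.sq_sqrt hx.le, mul_comm]

theorem HasLogDerivAt.rpow_const (hf : HasLogDerivAt f L x) (hx : f x ≠ 0) (p : ℝ) :
    HasLogDerivAt (fun y => f y ^ p) (p * L) x := by
  unfold HasLogDerivAt at *
  refine (hf.rpow_const (p := p) (Or.inl hx)).congr_deriv ?_
  rw [Real.rpow_sub_one hx]
  field_simp

end

theorem HasDerivAt.hasLogDerivAt_const_sub_sq {u : ℝ → ℝ} {u' r : ℝ} (k : ℝ)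
    (hu : HasDerivAt u u' r) (hk : k - u r ^ 2 ≠ 0) :
    HasLogDerivAt (fun y => k - u y ^ 2) (-(2 * u r * u') / (k - u r ^ 2)) r :=
  (((hasDerivAt_const r k).sub (hu.pow 2)).congr_deriv (by ring)).hasLogDerivAt hk

section

variable {γ : ℝ} {Δ B u c : ℝ → ℝ} {Δ' B' u' c' r : ℝ}

theorem hasLogDerivAt_specificEnergy (hΔ : HasDerivAt Δ Δ' r) (hB : HasDerivAt B B' r)
    (hu : HasDerivAt u u' r) (hc : HasDerivAt c c' r) (hΔ0 : 0 < Δ r) (hB0 : 0 < B r)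
    (hu1 : u r ^ 2 < 1) (hc1 : c r ^ 2 ≠ γ - 1) :
    HasLogDerivAt (fun y => (γ - 1) / (γ - 1 - c y ^ 2) * √(Δ y / (B y * (1 - u y ^ 2))))
      (2 * c r * c' / (γ - 1 - c r ^ 2) + (Δ' / Δ r - B' / B r) / 2 +
        u r * u' / (1 - u r ^ 2)) r := by
  have hs : γ - 1 - c r ^ 2 ≠ 0 := sub_ne_zero.mpr hc1.symm
  have hV : 0 < 1 - u r ^ 2 := sub_pos.mpr hu1
  have h := ((hasLogDerivAt_const (γ - 1) r).div (hc.hasLogDerivAt_const_sub_sq _ hs) hs).mul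
    ((hΔ.hasLogDerivAt hΔ0.ne').div ((hB.hasLogDerivAt hB0.ne').mul
      (hu.hasLogDerivAt_const_sub_sq 1 hV.ne')) (by positivity) |>.sqrt (by positivity))
  refine h.congr_logDeriv ?_
  field_simp
  ring

theorem hasLogDerivAt_entropyRate (hΔ : HasDerivAt Δ Δ' r) (hu : HasDerivAt u u' r)
    (hc : HasDerivAt c c' r) (hγ : γ ≠ 1) (hΔ0 : 0 < Δ r) (hu0 : u r ≠ 0) (hu1 : u r ^ 2 < 1)
    (hc0 : c r ≠ 0) (hc1 : c r ^ 2 ≠ γ - 1) (hr : r ≠ 0) :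
    HasLogDerivAt (fun y => √(Δ y) * c y ^ (2 / (γ - 1)) * (u y / √(1 - u y ^ 2)) *
        ((γ - 1) / (γ - 1 - c y ^ 2)) ^ (1 / (γ - 1)) * y)
      (Δ' / (2 * Δ r) + 2 * c' / (c r * (γ - 1 - c r ^ 2)) + u' / (u r * (1 - u r ^ 2)) + 1 / r)
      r := by
  have hg : γ - 1 ≠ 0 := sub_ne_zero.mpr hγ
  have hs : γ - 1 - c r ^ 2 ≠ 0 := sub_ne_zero.mpr hc1.symm
  have hV : 0 < 1 - u r ^ 2 := sub_pos.mpr hu1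
  have h := ((((hΔ.hasLogDerivAt hΔ0.ne').sqrt hΔ0).mul
    ((hc.hasLogDerivAt hc0).rpow_const hc0 (2 / (γ - 1)))).mul
    ((hu.hasLogDerivAt hu0).div ((hu.hasLogDerivAt_const_sub_sq 1 hV.ne').sqrt hV)
      (Real.sqrt_pos.mpr hV).ne')).mul
    (((hasLogDerivAt_const (γ - 1) r).div (hc.hasLogDerivAt_const_sub_sq _ hs) hs).rpow_const
      (div_ne_zero hg hs) (1 / (γ - 1))) |>.mul (hasLogDerivAt_id' hr)
  refine h.congr_logDeriv ?_
  field_simp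
  ring

end

theorem velocity_gradient_of_logDeriv_eq_zero {γ a r Δ B B' u u' c c' : ℝ}
    (hΔ : Δ = r ^ 2 - 2 * r + a ^ 2) (hr : r ≠ 0) (hΔ0 : Δ ≠ 0) (hB : B ≠ 0) (hu : u ≠ 0)
    (hc : c ≠ 0) (hs : γ - 1 - c ^ 2 ≠ 0) (hV : 1 - u ^ 2 ≠ 0)
    (hE : 2 * c * c' / (γ - 1 - c ^ 2) + ((2 * r - 2) / Δ - B' / B) / 2 +
      u * u' / (1 - u ^ 2) = 0)
    (hΞ : (2 * r - 2) / (2 * Δ) + 2 * c' / (c * (γ - 1 - c ^ 2)) + u' / (u * (1 - u ^ 2)) +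
      1 / r = 0) :
    (u ^ 2 - c ^ 2) * u' =
      u * (1 - u ^ 2) * (c ^ 2 * (2 * r ^ 2 - 3 * r + a ^ 2) / (Δ * r) +
        (1 / 2) * (B' / B - (2 * r - 2) / Δ)) := by
  have hsplit : (2 * r ^ 2 - 3 * r + a ^ 2) / (Δ * r) = (2 * r - 2) / (2 * Δ) + 1 / r := by
    field_simp
    linear_combination -hΔ
  rw [mul_div_assoc, hsplit]
  linear_combination (norm := (field_simp; ring)) (u * (1 - u ^ 2)) * (hE - c ^ 2 * hΞ)

theorem conical_adiabatic_velocity_gradient_general (γ a r₀ : ℝ) (hr : 0 < r₀)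
    (Δ : ℝ → ℝ) (hΔdef : Δ = fun r => r ^ 2 - 2 * r + a ^ 2) (hΔpos : 0 < Δ r₀)
    (B u c : ℝ → ℝ)
    (hB : DifferentiableAt ℝ B r₀) (hu : DifferentiableAt ℝ u r₀)
    (hc : DifferentiableAt ℝ c r₀)
    (hB0 : 0 < B r₀) (hu0 : 0 < u r₀) (hu1 : u r₀ < 1)
    (hc0 : 0 < c r₀) (hc1 : (c r₀) ^ 2 < γ - 1)
    (E Ξ : ℝ → ℝ)
    (hE : E = fun r => ((γ - 1) / (γ - 1 - (c r) ^ 2)) *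
      Real.sqrt (Δ r / (B r * (1 - (u r) ^ 2))))
    (hΞ : Ξ = fun r => Real.sqrt (Δ r) * (c r) ^ (2 / (γ - 1)) *
      (u r / Real.sqrt (1 - (u r) ^ 2)) *
      ((γ - 1) / (γ - 1 - (c r) ^ 2)) ^ (1 / (γ - 1)) * r)
    (hE' : deriv E r₀ = 0) (hΞ' : deriv Ξ r₀ = 0) :
    ((u r₀) ^ 2 - (c r₀) ^ 2) * deriv u r₀ =
      u r₀ * (1 - (u r₀) ^ 2) *
        ((c r₀) ^ 2 * (2 * r₀ ^ 2 - 3 * r₀ + a ^ 2) / (Δ r₀ * r₀) +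
          (1 / 2) * (deriv B r₀ / B r₀ - (2 * r₀ - 2) / Δ r₀)) := by
  subst hE hΞ
  have hV : 0 < 1 - u r₀ ^ 2 := by nlinarith
  have hs : 0 < γ - 1 - c r₀ ^ 2 := sub_pos.mpr hc1
  have hγ : 1 < γ := by nlinarith
  have hΔ' : HasDerivAt Δ (2 * r₀ - 2) r₀ := by
    subst hΔdef
    exact (((hasDerivAt_pow 2 r₀).sub ((hasDerivAt_id' r₀).const_mul 2)).add_const _).congr_deriv
      (by ring)
  have hE0 := (hasLogDerivAt_specificEnergy hΔ' hB.hasDerivAt hu.hasDerivAt hc.hasDerivAt hΔpos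
    hB0 (by linarith) hc1.ne).eq_zero_of_deriv_eq_zero (by positivity) hE'
  have hΞ0 := (hasLogDerivAt_entropyRate hΔ' hu.hasDerivAt hc.hasDerivAt hγ.ne' hΔpos
    hu0.ne' (by linarith) hc0.ne' hc1.ne hr.ne').eq_zero_of_deriv_eq_zero
    (by positivity) hΞ'
  exact velocity_gradient_of_logDeriv_eq_zero (congrFun hΔdef r₀) hr.ne' hΔpos.ne' hB0.ne'
    hu0.ne' hc0.ne' hs.ne' hV.ne' hE0 hΞ0

/-- Velocity-gradient equation for stationary adiabatic conical accretion onto a Kerr black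
hole: if the specific energy `E` and entropy accretion rate `Ξ` are stationary at `r₀`, then
`(u² − c²)·u′ = u(1−u²)·[c²(2r² − 3r + a²)/(Δr) + (1/2)(B′/B − Δ′/Δ)]` at `r₀`. -/
theorem conical_adiabatic_velocity_gradient (γ a r₀ : ℝ) (hγ : 1 < γ) (hr : 0 < r₀)
    (Δ : ℝ → ℝ) (hΔdef : Δ = fun r => r ^ 2 - 2 * r + a ^ 2) (hΔpos : 0 < Δ r₀)
    (B u c : ℝ → ℝ)
    (hB : DifferentiableAt ℝ B r₀) (hu : DifferentiableAt ℝ u r₀)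
    (hc : DifferentiableAt ℝ c r₀)
    (hB0 : 0 < B r₀) (hu0 : 0 < u r₀) (hu1 : u r₀ < 1)
    (hc0 : 0 < c r₀) (hc1 : (c r₀) ^ 2 < γ - 1)
    (E Ξ : ℝ → ℝ)
    (hE : E = fun r => ((γ - 1) / (γ - 1 - (c r) ^ 2)) *
      Real.sqrt (Δ r / (B r * (1 - (u r) ^ 2))))
    (hΞ : Ξ = fun r => Real.sqrt (Δ r) * (c r) ^ (2 / (γ - 1)) *
      (u r / Real.sqrt (1 - (u r) ^ 2)) *
      ((γ - 1) / (γ - 1 - (c r) ^ 2)) ^ (1 / (γ - 1)) * r)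
    (hE' : deriv E r₀ = 0) (hΞ' : deriv Ξ r₀ = 0) :
    ((u r₀) ^ 2 - (c r₀) ^ 2) * deriv u r₀ =
      u r₀ * (1 - (u r₀) ^ 2) *
        ((c r₀) ^ 2 * (2 * r₀ ^ 2 - 3 * r₀ + a ^ 2) / (Δ r₀ * r₀) +
          (1 / 2) * (deriv B r₀ / B r₀ - (2 * r₀ - 2) / Δ r₀)) :=
  conical_adiabatic_velocity_gradient_general γ a r₀ hr Δ hΔdef hΔpos B u c hB hu hc hB0 hu0 hu1 hc0
    hc1 E Ξ hE hΞ hE' hΞ'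
end

section
/- Let γ > 1, a ∈ ℝ, r₀ > 0 with Δ(r₀) > 0 where Δ(r) = r² − 2r + a². Let B, f, u, c : ℝ → ℝ be differentiable at r₀ with B(r₀) > 0, f(r₀) > 0, 0 < u(r₀) < 1, 0 < c(r₀) and c(r₀)² < γ − 1. Define E(r) = ((γ−1)/(γ−1−c(r)²))·√(Δ(r)/(B(r)(1−u(r)²))) and Ξ(r) = √(Δ(r))·c(r)^{2/(γ−1)}·(u(r)/√(1−u(r)²))·((γ−1)/(γ−1−c(r)²))^{1/(γ−1)}·c(r)·√((γ−1)/(γ(γ−1−c(r)²)))·f(r). If E′(r₀) = 0 and Ξ′(r₀) = 0, then at r = r₀: (u² − 2c²/(γ+1))·u′ = u(1−u²)·[ (2c²/(γ+1))·(Δ′/(2Δ) + f′/f) + (1/2)·(B′/B − Δ′/Δ) ], where Δ′ = 2r − 2. -/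
/-!
Both conserved quantities are positive near `r₀`, so their derivatives vanish exactly when their
logarithmic derivatives do. Taking logarithms turns `E` and `Ξ` into sums of logarithms of the
flow variables, and the two resulting linear relations between `u′` and `c′` determine `u′`
once `c′` is eliminated.
-/

open Real Filter Topology

theorem HasDerivAt.eq_zero_of_log_eventuallyEq {g h : ℝ → ℝ} {x L : ℝ}
    (hpos : ∀ᶠ y in 𝓝 x, 0 < g y) (hlog : (fun y => Real.log (g y)) =ᶠ[𝓝 x] h)
    (hh : HasDerivAt h L x) (hg : _root_.deriv g x = 0) : L = 0 := by
  have hexp : g =ᶠ[𝓝 x] fun y => Real.exp (h y) := by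
    filter_upwards [hpos, hlog] with y hy hly
    rw [← hly, exp_log hy]
  have hderiv : HasDerivAt g (Real.exp (h x) * L) x := hh.exp.congr_of_eventuallyEq hexp
  rw [hderiv.deriv] at hg
  exact (mul_eq_zero.mp hg).resolve_left (exp_pos _).ne'

noncomputable def specificEnergy (γ Δ B u c : ℝ) : ℝ :=
  ((γ - 1) / (γ - 1 - c ^ 2)) * Real.sqrt (Δ / (B * (1 - u ^ 2)))

noncomputable def entropyAccretionRate (γ Δ f u c : ℝ) : ℝ :=
  Real.sqrt Δ * c ^ (2 / (γ - 1)) * (u / Real.sqrt (1 - u ^ 2)) *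
    ((γ - 1) / (γ - 1 - c ^ 2)) ^ (1 / (γ - 1)) *
    (c * Real.sqrt ((γ - 1) / (γ * (γ - 1 - c ^ 2)))) * f

section Pointwise

variable {γ Δ B f u c : ℝ}

theorem specificEnergy_pos (hΔ : 0 < Δ) (hB : 0 < B) (hw : 0 < 1 - u ^ 2)
    (hk : 0 < γ - 1 - c ^ 2) : 0 < specificEnergy γ Δ B u c :=
  mul_pos (div_pos (by nlinarith) hk) (sqrt_pos.mpr (by positivity))

theorem log_specificEnergy (hΔ : 0 < Δ) (hB : 0 < B) (hw : 0 < 1 - u ^ 2)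
    (hk : 0 < γ - 1 - c ^ 2) :
    log (specificEnergy γ Δ B u c) =
      log (γ - 1) - log (γ - 1 - c ^ 2) + (log Δ - log B - log (1 - u ^ 2)) / 2 := by
  have hm : 0 < γ - 1 := by nlinarith
  rw [specificEnergy, log_mul (div_pos hm hk).ne' (sqrt_pos.mpr (by positivity)).ne',
    log_div hm.ne' hk.ne', log_sqrt (by positivity), log_div hΔ.ne' (by positivity),
    log_mul hB.ne' hw.ne']
  ring

theorem entropyAccretionRate_pos (hγ : 1 < γ) (hΔ : 0 < Δ) (hf : 0 < f) (hu : 0 < u)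
    (hw : 0 < 1 - u ^ 2) (hc : 0 < c) (hk : 0 < γ - 1 - c ^ 2) :
    0 < entropyAccretionRate γ Δ f u c := by
  unfold entropyAccretionRate
  positivity

/-- The powers of `c` and of `γ - 1 - c²` combine to the common exponent `(γ + 1) / (γ - 1)`. -/
theorem log_entropyAccretionRate (hγ : 1 < γ) (hΔ : 0 < Δ) (hf : 0 < f) (hu : 0 < u)
    (hw : 0 < 1 - u ^ 2) (hc : 0 < c) (hk : 0 < γ - 1 - c ^ 2) :
    log (entropyAccretionRate γ Δ f u c) =
      log Δ / 2 + (γ + 1) / (γ - 1) * (log c - log (γ - 1 - c ^ 2) / 2) + log u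
        - log (1 - u ^ 2) / 2 + log f + (log (γ - 1) / (γ - 1) + (log (γ - 1) - log γ) / 2) := by
  have hm : 0 < γ - 1 := by linarith
  have hγ0 : 0 < γ := by linarith
  rw [entropyAccretionRate, log_mul (by positivity) hf.ne',
    log_mul (by positivity) (by positivity), log_mul (by positivity) (by positivity),
    log_mul (by positivity) (by positivity), log_mul (by positivity) (by positivity),
    log_sqrt hΔ.le, log_rpow hc, log_div hu.ne' (by positivity), log_sqrt hw.le,
    log_rpow (div_pos hm hk), log_div hm.ne' hk.ne', log_mul hc.ne' (by positivity),
    log_sqrt (by positivity), log_div hm.ne' (by positivity), log_mul hγ0.ne' hk.ne']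
  field_simp
  ring

end Pointwise

section Stationary

variable {γ r₀ Δ' B' f' u' c' : ℝ} {Δ B f u c : ℝ → ℝ}

theorem logDeriv_specificEnergy_eq_zero (hΔ : HasDerivAt Δ Δ' r₀) (hB : HasDerivAt B B' r₀)
    (hu : HasDerivAt u u' r₀) (hc : HasDerivAt c c' r₀) (hΔ0 : 0 < Δ r₀) (hB0 : 0 < B r₀)
    (hw : 0 < 1 - u r₀ ^ 2) (hk : 0 < γ - 1 - c r₀ ^ 2)
    (hE : deriv (fun r => specificEnergy γ (Δ r) (B r) (u r) (c r)) r₀ = 0) :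
    2 * c r₀ * c' / (γ - 1 - c r₀ ^ 2) + (Δ' / Δ r₀ - B' / B r₀) / 2
      + u r₀ * u' / (1 - u r₀ ^ 2) = 0 := by
  have hw' := (hu.fun_pow 2).const_sub 1
  have hk' := (hc.fun_pow 2).const_sub (γ - 1)
  have hev : ∀ᶠ r in 𝓝 r₀, 0 < Δ r ∧ 0 < B r ∧ 0 < 1 - u r ^ 2 ∧ 0 < γ - 1 - c r ^ 2 :=
    (hΔ.continuousAt.tendsto.eventually_const_lt hΔ0).and <|
      (hB.continuousAt.tendsto.eventually_const_lt hB0).and <|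
      (hw'.continuousAt.tendsto.eventually_const_lt hw).and
      (hk'.continuousAt.tendsto.eventually_const_lt hk)
  have hderiv := ((hasDerivAt_const r₀ (log (γ - 1))).sub (hk'.log hk.ne')).add
    ((((hΔ.log hΔ0.ne').sub (hB.log hB0.ne')).sub (hw'.log hw.ne')).div_const 2)
  convert hderiv.eq_zero_of_log_eventuallyEq
    (hev.mono fun r ⟨hΔr, hBr, hwr, hkr⟩ => specificEnergy_pos hΔr hBr hwr hkr)
    (hev.mono fun r ⟨hΔr, hBr, hwr, hkr⟩ => log_specificEnergy hΔr hBr hwr hkr) hE using 1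
  field_simp
  ring

theorem logDeriv_entropyAccretionRate_eq_zero (hγ : 1 < γ) (hΔ : HasDerivAt Δ Δ' r₀)
    (hf : HasDerivAt f f' r₀) (hu : HasDerivAt u u' r₀) (hc : HasDerivAt c c' r₀)
    (hΔ0 : 0 < Δ r₀) (hf0 : 0 < f r₀) (hu0 : 0 < u r₀) (hw : 0 < 1 - u r₀ ^ 2)
    (hc0 : 0 < c r₀) (hk : 0 < γ - 1 - c r₀ ^ 2)
    (hΞ : deriv (fun r => entropyAccretionRate γ (Δ r) (f r) (u r) (c r)) r₀ = 0) :
    Δ' / (2 * Δ r₀) + (γ + 1) / (γ - 1) * (c' / c r₀ + c r₀ * c' / (γ - 1 - c r₀ ^ 2))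
      + u' / u r₀ + u r₀ * u' / (1 - u r₀ ^ 2) + f' / f r₀ = 0 := by
  have hw' := (hu.fun_pow 2).const_sub 1
  have hk' := (hc.fun_pow 2).const_sub (γ - 1)
  have hev : ∀ᶠ r in 𝓝 r₀, 0 < Δ r ∧ 0 < f r ∧ 0 < u r ∧ 0 < 1 - u r ^ 2 ∧ 0 < c r ∧
      0 < γ - 1 - c r ^ 2 :=
    (hΔ.continuousAt.tendsto.eventually_const_lt hΔ0).and <|
      (hf.continuousAt.tendsto.eventually_const_lt hf0).and <|
      (hu.continuousAt.tendsto.eventually_const_lt hu0).and <|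
      (hw'.continuousAt.tendsto.eventually_const_lt hw).and <|
      (hc.continuousAt.tendsto.eventually_const_lt hc0).and
      (hk'.continuousAt.tendsto.eventually_const_lt hk)
  have hderiv := (((((hΔ.log hΔ0.ne').div_const 2).add (((hc.log hc0.ne').sub
    ((hk'.log hk.ne').div_const 2)).const_mul ((γ + 1) / (γ - 1)))).add (hu.log hu0.ne')).sub
    ((hw'.log hw.ne').div_const 2)).add (hf.log hf0.ne') |>.add_const
    (log (γ - 1) / (γ - 1) + (log (γ - 1) - log γ) / 2)
  convert hderiv.eq_zero_of_log_eventuallyEq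
    (hev.mono fun r ⟨hΔr, hfr, hur, hwr, hcr, hkr⟩ =>
      entropyAccretionRate_pos hγ hΔr hfr hur hwr hcr hkr)
    (hev.mono fun r ⟨hΔr, hfr, hur, hwr, hcr, hkr⟩ =>
      log_entropyAccretionRate hγ hΔr hfr hur hwr hcr hkr) hΞ using 1
  field_simp
  ring

end Stationary

/-- With `k = γ - 1 - c²`, the `Ξ`-relation reads
`(γ + 1) c′ / (c k) = -(Δ′ / (2Δ) + u′ / (u (1 - u²)) + f′ / f)`, and the `E`-relation contains
`2 c c′ / k`, which is `2c² / (γ + 1)` times that; the goal is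
`u (1 - u²) · (E-relation - 2c² / (γ + 1) · Ξ-relation)`. -/
theorem velocity_gradient_of_critical {γ Δ B f u c Δ' B' f' u' c' : ℝ} (hΔ : Δ ≠ 0)
    (hB : B ≠ 0) (hf : f ≠ 0) (hu : u ≠ 0) (hc : c ≠ 0) (hw : 1 - u ^ 2 ≠ 0)
    (hk : γ - 1 - c ^ 2 ≠ 0) (hγm : γ - 1 ≠ 0) (hγp : γ + 1 ≠ 0)
    (hE : 2 * c * c' / (γ - 1 - c ^ 2) + (Δ' / Δ - B' / B) / 2 + u * u' / (1 - u ^ 2) = 0)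
    (hΞ : Δ' / (2 * Δ) + (γ + 1) / (γ - 1) * (c' / c + c * c' / (γ - 1 - c ^ 2))
      + u' / u + u * u' / (1 - u ^ 2) + f' / f = 0) :
    (u ^ 2 - 2 * c ^ 2 / (γ + 1)) * u' =
      u * (1 - u ^ 2) * ((2 * c ^ 2 / (γ + 1)) * (Δ' / (2 * Δ) + f' / f) +
        (1 / 2) * (B' / B - Δ' / Δ)) := by
  linear_combination (norm := skip)
    u * (1 - u ^ 2) * hE - u * (1 - u ^ 2) * (2 * c ^ 2 / (γ + 1)) * hΞ
  field_simp
  ring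

theorem novikov_thorne_adiabatic_velocity_gradient_general (γ a r₀ : ℝ) (hγ : 1 < γ)
    (Δ : ℝ → ℝ) (hΔdef : Δ = fun r => r ^ 2 - 2 * r + a ^ 2) (hΔpos : 0 < Δ r₀)
    (B f u c : ℝ → ℝ)
    (hB : DifferentiableAt ℝ B r₀) (hf : DifferentiableAt ℝ f r₀)
    (hu : DifferentiableAt ℝ u r₀) (hc : DifferentiableAt ℝ c r₀)
    (hB0 : 0 < B r₀) (hf0 : 0 < f r₀) (hu0 : 0 < u r₀) (hu1 : u r₀ < 1)
    (hc0 : 0 < c r₀) (hc1 : (c r₀) ^ 2 < γ - 1)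
    (E Ξ : ℝ → ℝ)
    (hE : E = fun r => ((γ - 1) / (γ - 1 - (c r) ^ 2)) *
      Real.sqrt (Δ r / (B r * (1 - (u r) ^ 2))))
    (hΞ : Ξ = fun r => Real.sqrt (Δ r) * (c r) ^ (2 / (γ - 1)) *
      (u r / Real.sqrt (1 - (u r) ^ 2)) *
      ((γ - 1) / (γ - 1 - (c r) ^ 2)) ^ (1 / (γ - 1)) *
      (c r * Real.sqrt ((γ - 1) / (γ * (γ - 1 - (c r) ^ 2)))) * f r)
    (hE' : deriv E r₀ = 0) (hΞ' : deriv Ξ r₀ = 0) :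
    ((u r₀) ^ 2 - 2 * (c r₀) ^ 2 / (γ + 1)) * deriv u r₀ =
      u r₀ * (1 - (u r₀) ^ 2) *
        ((2 * (c r₀) ^ 2 / (γ + 1)) *
            ((2 * r₀ - 2) / (2 * Δ r₀) + deriv f r₀ / f r₀) +
          (1 / 2) * (deriv B r₀ / B r₀ - (2 * r₀ - 2) / Δ r₀)) := by
  have hw : 0 < 1 - u r₀ ^ 2 := by nlinarith
  have hk : 0 < γ - 1 - c r₀ ^ 2 := by linarith
  have hΔ' : HasDerivAt Δ (2 * r₀ - 2) r₀ := by
    rw [hΔdef]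
    simpa using ((hasDerivAt_pow 2 r₀).sub ((hasDerivAt_id r₀).const_mul 2)).add_const (a ^ 2)
  subst hE hΞ
  exact velocity_gradient_of_critical hΔpos.ne' hB0.ne' hf0.ne' hu0.ne' hc0.ne' hw.ne' hk.ne'
    (by linarith) (by linarith)
    (logDeriv_specificEnergy_eq_zero hΔ' hB.hasDerivAt hu.hasDerivAt hc.hasDerivAt hΔpos hB0 hw hk
      hE')
    (logDeriv_entropyAccretionRate_eq_zero hγ hΔ' hf.hasDerivAt hu.hasDerivAt hc.hasDerivAt hΔpos
      hf0 hu0 hw hc0 hk hΞ')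

/-- Velocity-gradient equation for stationary adiabatic accretion onto a Kerr black hole
with Novikov–Thorne disc height `H = c√((γ−1)/(γ(γ−1−c²)))·f(r)`: if the specific energy
`E` and entropy accretion rate `Ξ` are stationary at `r₀`, then
`(u² − 2c²/(γ+1))·u′ = u(1−u²)·[(2c²/(γ+1))(Δ′/(2Δ) + f′/f) + (1/2)(B′/B − Δ′/Δ)]` at `r₀`. -/
theorem novikov_thorne_adiabatic_velocity_gradient (γ a r₀ : ℝ) (hγ : 1 < γ) (hr : 0 < r₀)
    (Δ : ℝ → ℝ) (hΔdef : Δ = fun r => r ^ 2 - 2 * r + a ^ 2) (hΔpos : 0 < Δ r₀)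
    (B f u c : ℝ → ℝ)
    (hB : DifferentiableAt ℝ B r₀) (hf : DifferentiableAt ℝ f r₀)
    (hu : DifferentiableAt ℝ u r₀) (hc : DifferentiableAt ℝ c r₀)
    (hB0 : 0 < B r₀) (hf0 : 0 < f r₀) (hu0 : 0 < u r₀) (hu1 : u r₀ < 1)
    (hc0 : 0 < c r₀) (hc1 : (c r₀) ^ 2 < γ - 1)
    (E Ξ : ℝ → ℝ)
    (hE : E = fun r => ((γ - 1) / (γ - 1 - (c r) ^ 2)) *
      Real.sqrt (Δ r / (B r * (1 - (u r) ^ 2))))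
    (hΞ : Ξ = fun r => Real.sqrt (Δ r) * (c r) ^ (2 / (γ - 1)) *
      (u r / Real.sqrt (1 - (u r) ^ 2)) *
      ((γ - 1) / (γ - 1 - (c r) ^ 2)) ^ (1 / (γ - 1)) *
      (c r * Real.sqrt ((γ - 1) / (γ * (γ - 1 - (c r) ^ 2)))) * f r)
    (hE' : deriv E r₀ = 0) (hΞ' : deriv Ξ r₀ = 0) :
    ((u r₀) ^ 2 - 2 * (c r₀) ^ 2 / (γ + 1)) * deriv u r₀ =
      u r₀ * (1 - (u r₀) ^ 2) *
        ((2 * (c r₀) ^ 2 / (γ + 1)) *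
            ((2 * r₀ - 2) / (2 * Δ r₀) + deriv f r₀ / f r₀) +
          (1 / 2) * (deriv B r₀ / B r₀ - (2 * r₀ - 2) / Δ r₀)) :=
  novikov_thorne_adiabatic_velocity_gradient_general γ a r₀ hγ Δ hΔdef hΔpos B f u c hB hf hu hc hB0
    hf0 hu0 hu1 hc0 hc1 E Ξ hE hΞ hE' hΞ'
end

section
/- Let a ∈ ℝ, r > 0 with Δ(r) > 0 where Δ(r) = r² − 2r + a², and let 0 < u < 1, c > 0, β ≥ 0. Define g_rr = r²/Δ, g^{rr} = Δ/r², v^r = u·√Δ/(r·√(1−u²)), c_eff = c/√(1+β), and α = 1 − (1+β)/c². Then the acoustic metric component G_tt = −g^{rr} − α·(v^r)² satisfies G_tt = (u² − c_eff²)/(c_eff²·(1 − u²)·g_rr); in particular G_tt = 0 if and only if u = c_eff. -/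
/-- The acoustic metric component `G_tt = −g^{rr} − α(v^r)²` with `α = 1 − (1+β)/c²`
satisfies `G_tt = (u² − c_eff²)/(c_eff²(1 − u²)g_rr)` where `c_eff = c/√(1+β)`;
in particular `G_tt = 0` iff `u = c_eff`. -/
theorem acoustic_metric_Gtt (a r u c β : ℝ)
    (hr : 0 < r) (hΔpos : 0 < r ^ 2 - 2 * r + a ^ 2)
    (hu0 : 0 < u) (hu1 : u < 1) (hc : 0 < c) (hβ : 0 ≤ β) :
    let Δ : ℝ := r ^ 2 - 2 * r + a ^ 2
    let grr : ℝ := r ^ 2 / Δ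
    let grrInv : ℝ := Δ / r ^ 2
    let vr : ℝ := u * Real.sqrt Δ / (r * Real.sqrt (1 - u ^ 2))
    let ceff : ℝ := c / Real.sqrt (1 + β)
    let α : ℝ := 1 - (1 + β) / c ^ 2
    let Gtt : ℝ := -grrInv - α * vr ^ 2
    Gtt = (u ^ 2 - ceff ^ 2) / (ceff ^ 2 * (1 - u ^ 2) * grr) ∧
    (Gtt = 0 ↔ u = ceff) := by
  intro Δ grr grrInv vr ceff α Gtt
  have hΔ : (0:ℝ) < Δ := hΔpos
  have h1u : (0:ℝ) < 1 - u ^ 2 := by nlinarith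
  have h1β : (0:ℝ) < 1 + β := by linarith
  have hsΔ : Real.sqrt Δ ^ 2 = Δ := Real.sq_sqrt hΔ.le
  have hsu : Real.sqrt (1 - u ^ 2) ^ 2 = 1 - u ^ 2 := Real.sq_sqrt h1u.le
  have hsβ : Real.sqrt (1 + β) ^ 2 = 1 + β := Real.sq_sqrt h1β.le
  have hsβpos : 0 < Real.sqrt (1 + β) := Real.sqrt_pos.mpr h1β
  have hsupos : 0 < Real.sqrt (1 - u ^ 2) := Real.sqrt_pos.mpr h1u
  have hceff : 0 < ceff := div_pos hc hsβpos
  have hmain : Gtt = (u ^ 2 - ceff ^ 2) / (ceff ^ 2 * (1 - u ^ 2) * grr) := by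
    show -grrInv - α * vr ^ 2 = _
    simp only [grr, grrInv, vr, ceff, α]
    rw [div_pow, div_pow, mul_pow, mul_pow]
    rw [hsΔ, hsu, hsβ]
    field_simp
    ring
  refine ⟨hmain, ?_⟩
  rw [hmain]
  have hden : ceff ^ 2 * (1 - u ^ 2) * grr ≠ 0 := by
    have : 0 < grr := div_pos (pow_pos hr 2) hΔ
    positivity
  rw [div_eq_zero_iff]
  constructor
  · rintro (h | h)
    · have h2 : u ^ 2 = ceff ^ 2 := by linarith
      have h3 : (u - ceff) * (u + ceff) = 0 := by nlinarith
      rcases mul_eq_zero.mp h3 with h4 | h4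
      · linarith
      · linarith
    · exact absurd h hden
  · intro h
    left
    rw [h]; ring
end

section
/- Let c > 0 be constant, a ∈ ℝ, r₀ > 0 with Δ(r₀) > 0 where Δ(r) = r² − 2r + a². Let B, ρ, u : ℝ → ℝ be differentiable at r₀ with B(r₀) > 0, ρ(r₀) > 0, 0 < u(r₀) < 1. Define ξ(r) = ρ(r)^{c²}·√(Δ(r)/(B(r)(1−u(r)²))) and Ṁ(r) = ρ(r)·r·√(Δ(r))·u(r)/√(1−u(r)²). If ξ′(r₀) = 0 and Ṁ′(r₀) = 0, then at r = r₀: (u² − c²)·u′ = u(1−u²)·[ c²·(2r² − 3r + a²)/(Δ·r) + (1/2)·(B′/B − Δ′/Δ) ], where Δ′ = 2r − 2. -/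
/-!
Both conserved quantities are positive near `r₀`, so each is `exp` of its logarithm, and the
logarithms are sums of `log ρ`, `log B`, `log Δ`, `log u`, `log (1 - u²)` and `log r`.
Stationarity of `ξ` and `Ṁ` thus gives two equations that are linear in the logarithmic
derivatives `ρ'/ρ` and `u'`; eliminating `ρ'/ρ` leaves the velocity-gradient equation.
-/

open Real Filter Topology

theorem eq_zero_of_deriv_eq_zero_of_eventuallyEq_exp {f g : ℝ → ℝ} {x L : ℝ}
    (hg : HasDerivAt g L x) (hfg : f =ᶠ[𝓝 x] fun y => exp (g y)) (hf : deriv f x = 0) :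
    L = 0 := by
  have hderiv : exp (g x) * L = 0 := hf ▸ (hg.exp.congr_of_eventuallyEq hfg).deriv.symm
  exact (mul_eq_zero.mp hderiv).resolve_left (exp_pos _).ne'

theorem isothermal_bernoulli_eq_exp {c Δ B ρ u : ℝ} (hΔ : 0 < Δ) (hB : 0 < B) (hρ : 0 < ρ)
    (hw : 0 < 1 - u ^ 2) :
    ρ ^ (c ^ 2) * √(Δ / (B * (1 - u ^ 2))) =
      exp (c ^ 2 * log ρ + (log Δ - log B - log (1 - u ^ 2)) / 2) := by
  have hpos : 0 < ρ ^ (c ^ 2) * √(Δ / (B * (1 - u ^ 2))) := by positivity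
  rw [← exp_log hpos, log_mul (rpow_pos_of_pos hρ _).ne' (by positivity), log_rpow hρ,
    log_sqrt (by positivity), log_div hΔ.ne' (by positivity), log_mul hB.ne' hw.ne']
  ring_nf

theorem conical_accretion_rate_eq_exp {r Δ ρ u : ℝ} (hr : 0 < r) (hΔ : 0 < Δ) (hρ : 0 < ρ)
    (hu : 0 < u) (hw : 0 < 1 - u ^ 2) :
    ρ * r * √Δ * u / √(1 - u ^ 2) =
      exp (log ρ + log r + log Δ / 2 + log u - log (1 - u ^ 2) / 2) := by
  have hpos : 0 < ρ * r * √Δ * u / √(1 - u ^ 2) := by positivity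
  rw [← exp_log hpos, log_div (by positivity) (by positivity), log_mul (by positivity) hu.ne',
    log_mul (by positivity) (by positivity), log_mul hρ.ne' hr.ne', log_sqrt hΔ.le,
    log_sqrt hw.le]

/-- `hξ` and `hM` are `(log ξ)' = 0` and `(log Ṁ)' = 0`, with `lρ = ρ'/ρ` and `Δ' = 2r - 2`. -/
theorem velocity_gradient_of_stationary {c a r Δ B dB lρ u du : ℝ}
    (hΔ : Δ = r ^ 2 - 2 * r + a ^ 2) (hΔ0 : Δ ≠ 0) (hr : r ≠ 0) (hB : B ≠ 0) (hu : u ≠ 0)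
    (hw : 1 - u ^ 2 ≠ 0)
    (hξ : c ^ 2 * lρ + ((2 * r - 2) / Δ - dB / B + 2 * u * du / (1 - u ^ 2)) / 2 = 0)
    (hM : lρ + 1 / r + (2 * r - 2) / Δ / 2 + du / u + u * du / (1 - u ^ 2) = 0) :
    (u ^ 2 - c ^ 2) * du =
      u * (1 - u ^ 2) *
        (c ^ 2 * (2 * r ^ 2 - 3 * r + a ^ 2) / (Δ * r) + (1 / 2) * (dB / B - (2 * r - 2) / Δ)) := by
  have hnum : 2 * r ^ 2 - 3 * r + a ^ 2 = Δ + r * (r - 1) := by rw [hΔ]; ring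
  rw [hnum]
  field_simp at hξ hM ⊢
  linear_combination (r * u) * hξ - (2 * c ^ 2 * B) * hM

theorem conical_isothermal_velocity_gradient_general (c a r₀ : ℝ) (hr : 0 < r₀)
    (Δ : ℝ → ℝ) (hΔdef : Δ = fun r => r ^ 2 - 2 * r + a ^ 2) (hΔpos : 0 < Δ r₀)
    (B ρ u : ℝ → ℝ)
    (hB : DifferentiableAt ℝ B r₀) (hρ : DifferentiableAt ℝ ρ r₀)
    (hu : DifferentiableAt ℝ u r₀)
    (hB0 : 0 < B r₀) (hρ0 : 0 < ρ r₀) (hu0 : 0 < u r₀) (hu1 : u r₀ < 1)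
    (ξ Mdot : ℝ → ℝ)
    (hξ : ξ = fun r => (ρ r) ^ (c ^ 2) * Real.sqrt (Δ r / (B r * (1 - (u r) ^ 2))))
    (hM : Mdot = fun r => ρ r * r * Real.sqrt (Δ r) * u r / Real.sqrt (1 - (u r) ^ 2))
    (hξ' : deriv ξ r₀ = 0) (hM' : deriv Mdot r₀ = 0) :
    ((u r₀) ^ 2 - c ^ 2) * deriv u r₀ =
      u r₀ * (1 - (u r₀) ^ 2) *
        (c ^ 2 * (2 * r₀ ^ 2 - 3 * r₀ + a ^ 2) / (Δ r₀ * r₀) +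
          (1 / 2) * (deriv B r₀ / B r₀ - (2 * r₀ - 2) / Δ r₀)) := by
  have hw0 : 0 < 1 - u r₀ ^ 2 := by nlinarith
  have hΔ : HasDerivAt Δ (2 * r₀ - 2) r₀ := by
    subst hΔdef
    exact (((hasDerivAt_pow 2 r₀).sub ((hasDerivAt_id r₀).const_mul 2)).add_const _).congr_deriv
      (by simp)
  have hw : HasDerivAt (fun r => 1 - u r ^ 2) (-(2 * u r₀ * deriv u r₀)) r₀ :=
    ((hu.hasDerivAt.pow 2).const_sub 1).congr_deriv (by simp)
  have hpos : ∀ᶠ r in 𝓝 r₀, 0 < r ∧ 0 < Δ r ∧ 0 < B r ∧ 0 < ρ r ∧ 0 < u r ∧ 0 < 1 - u r ^ 2 :=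
    (lt_mem_nhds hr).and <| (hΔ.continuousAt.eventually (lt_mem_nhds hΔpos)).and <|
      (hB.continuousAt.eventually (lt_mem_nhds hB0)).and <|
      (hρ.continuousAt.eventually (lt_mem_nhds hρ0)).and <|
      (hu.continuousAt.eventually (lt_mem_nhds hu0)).and <|
      hw.continuousAt.eventually (lt_mem_nhds hw0)
  have hlogξ := eq_zero_of_deriv_eq_zero_of_eventuallyEq_exp
    (((hρ.hasDerivAt.log hρ0.ne').const_mul (c ^ 2)).add
      ((((hΔ.log hΔpos.ne').sub (hB.hasDerivAt.log hB0.ne')).sub (hw.log hw0.ne')).div_const 2))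
    (by
      filter_upwards [hpos] with r ⟨_, hΔr, hBr, hρr, _, hwr⟩
      exact hξ ▸ isothermal_bernoulli_eq_exp hΔr hBr hρr hwr)
    hξ'
  have hlogM := eq_zero_of_deriv_eq_zero_of_eventuallyEq_exp
    (((((hρ.hasDerivAt.log hρ0.ne').add (hasDerivAt_log hr.ne')).add
      ((hΔ.log hΔpos.ne').div_const 2)).add (hu.hasDerivAt.log hu0.ne')).sub
      ((hw.log hw0.ne').div_const 2))
    (by
      filter_upwards [hpos] with r ⟨hr, hΔr, _, hρr, hur, hwr⟩
      exact hM ▸ conical_accretion_rate_eq_exp hr hΔr hρr hur hwr)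
    hM'
  exact velocity_gradient_of_stationary (lρ := deriv ρ r₀ / ρ r₀) (by rw [hΔdef]) hΔpos.ne'
    hr.ne' hB0.ne' hu0.ne' hw0.ne' (by linear_combination hlogξ) (by linear_combination hlogM)

/-- Velocity-gradient equation for stationary isothermal conical accretion onto a Kerr
black hole: if `ξ = ρ^{c²}√(Δ/(B(1−u²)))` and `Ṁ = ρr√Δ·u/√(1−u²)` are stationary at
`r₀`, then `(u² − c²)·u′ = u(1−u²)·[c²(2r² − 3r + a²)/(Δr) + (1/2)(B′/B − Δ′/Δ)]`
at `r₀`. -/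
theorem conical_isothermal_velocity_gradient (c a r₀ : ℝ) (hc : 0 < c) (hr : 0 < r₀)
    (Δ : ℝ → ℝ) (hΔdef : Δ = fun r => r ^ 2 - 2 * r + a ^ 2) (hΔpos : 0 < Δ r₀)
    (B ρ u : ℝ → ℝ)
    (hB : DifferentiableAt ℝ B r₀) (hρ : DifferentiableAt ℝ ρ r₀)
    (hu : DifferentiableAt ℝ u r₀)
    (hB0 : 0 < B r₀) (hρ0 : 0 < ρ r₀) (hu0 : 0 < u r₀) (hu1 : u r₀ < 1)
    (ξ Mdot : ℝ → ℝ)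
    (hξ : ξ = fun r => (ρ r) ^ (c ^ 2) * Real.sqrt (Δ r / (B r * (1 - (u r) ^ 2))))
    (hM : Mdot = fun r => ρ r * r * Real.sqrt (Δ r) * u r / Real.sqrt (1 - (u r) ^ 2))
    (hξ' : deriv ξ r₀ = 0) (hM' : deriv Mdot r₀ = 0) :
    ((u r₀) ^ 2 - c ^ 2) * deriv u r₀ =
      u r₀ * (1 - (u r₀) ^ 2) *
        (c ^ 2 * (2 * r₀ ^ 2 - 3 * r₀ + a ^ 2) / (Δ r₀ * r₀) +
          (1 / 2) * (deriv B r₀ / B r₀ - (2 * r₀ - 2) / Δ r₀)) :=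
  conical_isothermal_velocity_gradient_general c a r₀ hr Δ hΔdef hΔpos B ρ u hB hρ hu hB0 hρ0 hu0
    hu1 ξ Mdot hξ hM hξ' hM'
end

section
/- Let c > 0 be constant, a ∈ ℝ, r₀ > 0 with Δ(r₀) > 0 where Δ(r) = r² − 2r + a². Let B, f, ρ, u : ℝ → ℝ be differentiable at r₀ with B(r₀) > 0, f(r₀) > 0, ρ(r₀) > 0, 0 < u(r₀) < 1. Define ξ(r) = ρ(r)^{c²}·√(Δ(r)/(B(r)(1−u(r)²))) and Ṁ(r) = ρ(r)·f(r)·√(Δ(r))·u(r)/√(1−u(r)²). If ξ′(r₀) = 0 and Ṁ′(r₀) = 0, then at r = r₀: (u² − c²)·u′ = u(1−u²)·[ c²·(Δ′/(2Δ) + f′/f) + (1/2)·(B′/B − Δ′/Δ) ], where Δ′ = 2r − 2. -/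
/-! Both conserved quantities are stationary at `r₀` and positive there, so their logarithmic
derivatives vanish. Each one is a product of powers of `ρ, f, Δ, B, u, 1 - u²`, hence its
logarithmic derivative is linear in those of the factors. Eliminating `ρ′/ρ` between the two
linear relations leaves `u′` with coefficient `(c² - u²)/(u(1 - u²))`, which is the sonic factor. -/

open Real

namespace Real

theorem logDeriv_fun_rpow_const {f : ℝ → ℝ} {x : ℝ} (p : ℝ) (hf : DifferentiableAt ℝ f x)
    (hx : 0 < f x) : logDeriv (fun y => f y ^ p) x = p * logDeriv f x := by
  rw [logDeriv_apply, (hf.hasDerivAt.rpow_const (Or.inl hx.ne')).deriv, logDeriv_apply,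
    rpow_sub_one hx.ne']
  field_simp [(rpow_pos_of_pos hx p).ne']

theorem logDeriv_fun_sqrt {f : ℝ → ℝ} {x : ℝ} (hf : DifferentiableAt ℝ f x) (hx : 0 < f x) :
    logDeriv (fun y => √(f y)) x = logDeriv f x / 2 := by
  rw [logDeriv_apply, (hf.hasDerivAt.sqrt hx.ne').deriv, logDeriv_apply]
  field_simp [(sqrt_pos.2 hx).ne']
  rw [sq_sqrt hx.le]

end Real

theorem logDeriv_one_sub_sq {u : ℝ → ℝ} {x : ℝ} (hu : DifferentiableAt ℝ u x) :
    logDeriv (fun y => 1 - u y ^ 2) x = -(2 * u x * deriv u x) / (1 - u x ^ 2) := by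
  rw [logDeriv_apply, ((hu.hasDerivAt.fun_pow 2).const_sub 1).deriv]
  ring

section

variable {Δ B f ρ u : ℝ → ℝ} {x : ℝ}

theorem logDeriv_quasiBernoulli (p : ℝ)
    (hΔ : DifferentiableAt ℝ Δ x) (hB : DifferentiableAt ℝ B x) (hρ : DifferentiableAt ℝ ρ x)
    (hu : DifferentiableAt ℝ u x) (hΔ0 : 0 < Δ x) (hB0 : 0 < B x) (hρ0 : 0 < ρ x)
    (hw0 : 0 < 1 - u x ^ 2) :
    logDeriv (fun r => ρ r ^ p * √(Δ r / (B r * (1 - u r ^ 2)))) x =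
      p * logDeriv ρ x + (logDeriv Δ x - logDeriv B x - logDeriv (fun r => 1 - u r ^ 2) x) / 2 := by
  have hw : DifferentiableAt ℝ (fun r => 1 - u r ^ 2) x := by fun_prop
  have hBw0 : 0 < B x * (1 - u x ^ 2) := mul_pos hB0 hw0
  have hq0 : 0 < Δ x / (B x * (1 - u x ^ 2)) := div_pos hΔ0 hBw0
  have hq : DifferentiableAt ℝ (fun r => Δ r / (B r * (1 - u r ^ 2))) x :=
    hΔ.div (hB.mul hw) hBw0.ne'
  rw [logDeriv_mul x (rpow_pos_of_pos hρ0 p).ne' (sqrt_pos.2 hq0).ne'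
      (hρ.rpow_const (Or.inl hρ0.ne')) (hq.sqrt hq0.ne'),
    logDeriv_fun_rpow_const p hρ hρ0, logDeriv_fun_sqrt hq hq0,
    logDeriv_div (g := fun r => B r * (1 - u r ^ 2)) x hΔ0.ne' hBw0.ne' hΔ (hB.mul hw),
    logDeriv_mul (f := B) (g := fun r => 1 - u r ^ 2) x hB0.ne' hw0.ne' hB hw]
  ring

theorem logDeriv_accretionRate
    (hΔ : DifferentiableAt ℝ Δ x) (hf : DifferentiableAt ℝ f x) (hρ : DifferentiableAt ℝ ρ x)
    (hu : DifferentiableAt ℝ u x) (hΔ0 : 0 < Δ x) (hf0 : 0 < f x) (hρ0 : 0 < ρ x)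
    (hu0 : 0 < u x) (hw0 : 0 < 1 - u x ^ 2) :
    logDeriv (fun r => ρ r * f r * √(Δ r) * u r / √(1 - u r ^ 2)) x =
      logDeriv ρ x + logDeriv f x + logDeriv Δ x / 2 + logDeriv u x -
        logDeriv (fun r => 1 - u r ^ 2) x / 2 := by
  have hw : DifferentiableAt ℝ (fun r => 1 - u r ^ 2) x := by fun_prop
  have hsΔ0 := sqrt_pos.2 hΔ0
  have hsΔ := hΔ.sqrt hΔ0.ne'
  rw [logDeriv_div x (by positivity) (sqrt_pos.2 hw0).ne' (by fun_prop) (hw.sqrt hw0.ne'),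
    logDeriv_mul x (by positivity) hu0.ne' (by fun_prop) hu,
    logDeriv_mul (f := fun r => ρ r * f r) x (by positivity) hsΔ0.ne' (hρ.mul hf) hsΔ,
    logDeriv_mul (f := ρ) x hρ0.ne' hf0.ne' hρ hf, logDeriv_fun_sqrt hΔ hΔ0, logDeriv_fun_sqrt hw hw0]

end

theorem isothermal_velocity_gradient_of_logDeriv {c U U' Lρ Lf LΔ LB Lw : ℝ}
    (hU : U ≠ 0) (hW : 1 - U ^ 2 ≠ 0) (hLw : Lw = -(2 * U * U') / (1 - U ^ 2))
    (hξ : c ^ 2 * Lρ + (LΔ - LB - Lw) / 2 = 0)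
    (hM : Lρ + Lf + LΔ / 2 + U' / U - Lw / 2 = 0) :
    (U ^ 2 - c ^ 2) * U' = U * (1 - U ^ 2) * (c ^ 2 * (LΔ / 2 + Lf) + (LB - LΔ) / 2) := by
  subst hLw
  field_simp at hξ hM
  linear_combination (U / 2) * hξ - (c ^ 2 / 2) * hM

theorem novikov_thorne_isothermal_velocity_gradient_general (c a r₀ : ℝ)
    (Δ : ℝ → ℝ) (hΔdef : Δ = fun r => r ^ 2 - 2 * r + a ^ 2) (hΔpos : 0 < Δ r₀)
    (B f ρ u : ℝ → ℝ)
    (hB : DifferentiableAt ℝ B r₀) (hf : DifferentiableAt ℝ f r₀)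
    (hρ : DifferentiableAt ℝ ρ r₀) (hu : DifferentiableAt ℝ u r₀)
    (hB0 : 0 < B r₀) (hf0 : 0 < f r₀) (hρ0 : 0 < ρ r₀) (hu0 : 0 < u r₀) (hu1 : u r₀ < 1)
    (ξ Mdot : ℝ → ℝ)
    (hξ : ξ = fun r => (ρ r) ^ (c ^ 2) * Real.sqrt (Δ r / (B r * (1 - (u r) ^ 2))))
    (hM : Mdot = fun r => ρ r * f r * Real.sqrt (Δ r) * u r / Real.sqrt (1 - (u r) ^ 2))
    (hξ' : deriv ξ r₀ = 0) (hM' : deriv Mdot r₀ = 0) :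
    ((u r₀) ^ 2 - c ^ 2) * deriv u r₀ =
      u r₀ * (1 - (u r₀) ^ 2) *
        (c ^ 2 * ((2 * r₀ - 2) / (2 * Δ r₀) + deriv f r₀ / f r₀) +
          (1 / 2) * (deriv B r₀ / B r₀ - (2 * r₀ - 2) / Δ r₀)) := by
  subst hξ hM
  have hw0 : 0 < 1 - u r₀ ^ 2 := by nlinarith
  have hΔd : HasDerivAt Δ (2 * r₀ - 2) r₀ := by
    subst hΔdef
    simpa using (((hasDerivAt_id r₀).fun_pow 2).sub ((hasDerivAt_id r₀).const_mul 2)).add_const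
      (a ^ 2)
  have hLΔ : logDeriv Δ r₀ = (2 * r₀ - 2) / Δ r₀ := by rw [logDeriv_apply, hΔd.deriv]
  have hξL := logDeriv_quasiBernoulli (c ^ 2) hΔd.differentiableAt hB hρ hu hΔpos hB0 hρ0 hw0
  have hML := logDeriv_accretionRate hΔd.differentiableAt hf hρ hu hΔpos hf0 hρ0 hu0 hw0
  rw [logDeriv_apply, hξ', zero_div] at hξL
  rw [logDeriv_apply, hM', zero_div] at hML
  rw [isothermal_velocity_gradient_of_logDeriv hu0.ne' hw0.ne' (logDeriv_one_sub_sq hu)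
    hξL.symm hML.symm, hLΔ, logDeriv_apply B, logDeriv_apply f]
  ring

/-- Velocity-gradient equation for stationary isothermal accretion onto a Kerr black hole
with Novikov–Thorne disc height `H = c·f(r)`: if `ξ = ρ^{c²}√(Δ/(B(1−u²)))` and
`Ṁ = ρf√Δ·u/√(1−u²)` are stationary at `r₀`, then
`(u² − c²)·u′ = u(1−u²)·[c²(Δ′/(2Δ) + f′/f) + (1/2)(B′/B − Δ′/Δ)]` at `r₀`. -/
theorem novikov_thorne_isothermal_velocity_gradient (c a r₀ : ℝ) (hc : 0 < c) (hr : 0 < r₀)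
    (Δ : ℝ → ℝ) (hΔdef : Δ = fun r => r ^ 2 - 2 * r + a ^ 2) (hΔpos : 0 < Δ r₀)
    (B f ρ u : ℝ → ℝ)
    (hB : DifferentiableAt ℝ B r₀) (hf : DifferentiableAt ℝ f r₀)
    (hρ : DifferentiableAt ℝ ρ r₀) (hu : DifferentiableAt ℝ u r₀)
    (hB0 : 0 < B r₀) (hf0 : 0 < f r₀) (hρ0 : 0 < ρ r₀) (hu0 : 0 < u r₀) (hu1 : u r₀ < 1)
    (ξ Mdot : ℝ → ℝ)
    (hξ : ξ = fun r => (ρ r) ^ (c ^ 2) * Real.sqrt (Δ r / (B r * (1 - (u r) ^ 2))))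
    (hM : Mdot = fun r => ρ r * f r * Real.sqrt (Δ r) * u r / Real.sqrt (1 - (u r) ^ 2))
    (hξ' : deriv ξ r₀ = 0) (hM' : deriv Mdot r₀ = 0) :
    ((u r₀) ^ 2 - c ^ 2) * deriv u r₀ =
      u r₀ * (1 - (u r₀) ^ 2) *
        (c ^ 2 * ((2 * r₀ - 2) / (2 * Δ r₀) + deriv f r₀ / f r₀) +
          (1 / 2) * (deriv B r₀ / B r₀ - (2 * r₀ - 2) / Δ r₀)) :=
  novikov_thorne_isothermal_velocity_gradient_general c a r₀ Δ hΔdef hΔpos B f ρ u hB hf hρ hu hB0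
    hf0 hρ0 hu0 hu1 ξ Mdot hξ hM hξ' hM'
end
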